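/- For μ > 0, the tensor H^T *_3 H + μ I is invertible with respect to the Einstein product, where H is any tensor of size M×N×P×M×N×P. -/

import Mathlib

/-! Indexed by the flattened triples, the Einstein product is matrix multiplication, and
`HᵀH + μI` is positive definite since `xᵀ(HᵀH + μI)x = ‖Hx‖² + μ‖x‖² > 0` for `x ≠ 0`;
a positive definite matrix is invertible. -/

def einsteinProd {I K J : Type*} [Fintype K]
    (A : I → K → ℝ) (B : K → J → ℝ) : I → J → ℝ :=
  fun i j => ∑ k, A i k * B k j

def blockTranspose {I J : Type*} (A : I → J → ℝ) : J → I → ℝ :=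
  fun j i => A i j

def idTensor (K : Type*) [DecidableEq K] : K → K → ℝ :=
  fun i j => if i = j then 1 else 0

open Matrix

variable {I J K : Type*}

theorem einsteinProd_eq_mul [Fintype K] (A : I → K → ℝ) (B : K → J → ℝ) :
    einsteinProd A B = of A * of B := rfl

theorem blockTranspose_eq_transpose (A : I → J → ℝ) : blockTranspose A = (of A)ᵀ := rfl

theorem idTensor_eq_one [DecidableEq K] : idTensor K = (1 : Matrix K K ℝ) := rfl

theorem exists_einsteinProd_inverse_of_isUnit [Fintype K] [DecidableEq K] {A : Matrix K K ℝ}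
    (hA : IsUnit A) : ∃ X, einsteinProd A X = idTensor K ∧ einsteinProd X A = idTensor K :=
  ⟨↑hA.unit⁻¹, hA.unit.mul_inv, hA.unit.inv_mul⟩

theorem posDef_transpose_mul_self_add_smul_one [Fintype I] [Fintype K] [DecidableEq K]
    (H : Matrix I K ℝ) {μ : ℝ} (hμ : 0 < μ) : (Hᵀ * H + μ • 1).PosDef :=
  PosDef.posSemidef_add (posSemidef_conjTranspose_mul_self H) (PosDef.one.smul hμ)

/-- For `μ > 0`, the tensor `H^T *_3 H + μ I` is invertible with respect to the
Einstein product, for `H` of size M×N×P×M×N×P. -/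
theorem HtH_add_mu_invertible {M N P : ℕ} (μ : ℝ) (hμ : 0 < μ)
    (H : Fin M × Fin N × Fin P → Fin M × Fin N × Fin P → ℝ) :
    ∃ X : Fin M × Fin N × Fin P → Fin M × Fin N × Fin P → ℝ,
      einsteinProd (einsteinProd (blockTranspose H) H +
          μ • idTensor (Fin M × Fin N × Fin P)) X = idTensor (Fin M × Fin N × Fin P) ∧
      einsteinProd X (einsteinProd (blockTranspose H) H +
          μ • idTensor (Fin M × Fin N × Fin P)) = idTensor (Fin M × Fin N × Fin P) := by
  rw [einsteinProd_eq_mul, blockTranspose_eq_transpose, idTensor_eq_one]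
  exact exists_einsteinProd_inverse_of_isUnit
    (posDef_transpose_mul_self_add_smul_one (of H) hμ).isUnit
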